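/- arXiv:2505.22625 — 8 statements merged into one kernel-verified Lean document; each statement's English description precedes it below -/
import Mathlib

section
/- Let D be a (not necessarily commutative) ring and let ζ, ζ', π, π', w, z ∈ D be elements such that ζ, ζ', π, π' commute pairwise and each of them commutes with w; wz = zw; ζz = zζ' and ζ'z = zζ; πz = zπ and π'z = zπ'; and u := ζ − ζ' is invertible in D. Set ϖ₃ := ζπ + ζ'π', ϖ₃' := ζ'π + ζπ', and x := (w + z − ζ'·(π + π'))·u⁻¹. Then (x − π)(x − π') = ((w − ϖ₃)(w − ϖ₃') − z²)·u⁻². -/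
/-- Lemma 2.3 of the paper. In an arbitrary (not necessarily
commutative) ring `D`, given elements `ζ ζ' π π'` commuting pairwise and with `w`,
with `z` semilinear (`ζz = zζ'`, `ζ'z = zζ`, `πz = zπ`, `π'z = zπ'`) and commuting
with `w`, and `v` a two-sided inverse of `u := ζ - ζ'`, setting
`ϖ₃ := ζπ + ζ'π'`, `ϖ₃' := ζ'π + ζπ'` and `x := (w + z - ζ'(π + π'))·u⁻¹`, one has
`(x - π)(x - π') = ((w - ϖ₃)(w - ϖ₃') - z²)·u⁻²`. -/
theorem stmt_0 {D : Type*} [Ring D]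
    (ζ ζ' π π' w z v : D)
    (hζζ' : ζ * ζ' = ζ' * ζ)
    (hζπ : ζ * π = π * ζ) (hζπ' : ζ * π' = π' * ζ)
    (hζ'π : ζ' * π = π * ζ') (hζ'π' : ζ' * π' = π' * ζ')
    (hππ' : π * π' = π' * π)
    (hwζ : w * ζ = ζ * w) (hwζ' : w * ζ' = ζ' * w)
    (hwπ : w * π = π * w) (hwπ' : w * π' = π' * w)
    (hwz : w * z = z * w)
    (hζz : ζ * z = z * ζ') (hζ'z : ζ' * z = z * ζ)
    (hπz : π * z = z * π) (hπ'z : π' * z = z * π')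
    (hv : (ζ - ζ') * v = 1) (hv' : v * (ζ - ζ') = 1) :
    ((w + z - ζ' * (π + π')) * v - π) * ((w + z - ζ' * (π + π')) * v - π') =
      ((w - (ζ * π + ζ' * π')) * (w - (ζ' * π + ζ * π')) - z ^ 2) * v ^ 2 := by
  set u := ζ - ζ' with hu
  -- v commutes with anything that commutes with u
  have hcomm : ∀ a : D, u * a = a * u → v * a = a * v := by
    intro a h
    calc v * a = v * a * (u * v) := by rw [hv, mul_one]
      _ = v * (a * u) * v := by noncomm_ring
      _ = v * (u * a) * v := by rw [h]
      _ = (v * u) * (a * v) := by noncomm_ring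
      _ = a * v := by rw [hv', one_mul]
  have huw : u * w = w * u := by rw [hu, sub_mul, mul_sub, hwζ, hwζ']
  have huπ : u * π = π * u := by rw [hu, sub_mul, mul_sub, hζπ, hζ'π]
  have huπ' : u * π' = π' * u := by rw [hu, sub_mul, mul_sub, hζπ', hζ'π']
  have huζ' : u * ζ' = ζ' * u := by rw [hu, sub_mul, mul_sub, hζζ']
  have hvw : v * w = w * v := hcomm w huw
  have hvA : v * (ζ' * (π + π')) = (ζ' * (π + π')) * v := by
    apply hcomm
    calc u * (ζ' * (π + π')) = (u * ζ') * π + (u * ζ') * π' := by noncomm_ring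
      _ = ζ' * (u * π) + ζ' * (u * π') := by rw [huζ']; noncomm_ring
      _ = (ζ' * (π + π')) * u := by rw [huπ, huπ']; noncomm_ring
  have hvπ'u : v * (π' * u) = (π' * u) * v := by
    apply hcomm
    calc u * (π' * u) = (u * π') * u := by noncomm_ring
      _ = (π' * u) * u := by rw [huπ']
  have hzu : z * u = -(u * z) := by
    rw [hu, sub_mul, mul_sub, hζz, hζ'z]; noncomm_ring
  have hvz : v * z = -(z * v) := by
    calc v * z = v * (z * (u * v)) := by rw [hv, mul_one]
      _ = v * (z * u) * v := by noncomm_ring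
      _ = v * (-(u * z)) * v := by rw [hzu]
      _ = -((v * u) * (z * v)) := by noncomm_ring
      _ = -(z * v) := by rw [hv', one_mul]
  -- abbreviations
  set A := w + z - ζ' * (π + π') with hA
  have gen : ∀ a b : D, a * v - b = (a - b * u) * v := fun a b => by
    rw [sub_mul, mul_assoc, hv, mul_one]
  have step1 : A * v - π = (A - π * u) * v := gen A π
  have step1' : A * v - π' = (A - π' * u) * v := gen A π'
  have step2 : v * (A - π' * u) = (w - z - ζ' * (π + π') - π' * u) * v := by
    calc v * (A - π' * u)
        = v * w + v * z - v * (ζ' * (π + π')) - v * (π' * u) := by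
          rw [hA]; noncomm_ring
      _ = w * v + -(z * v) - (ζ' * (π + π')) * v - (π' * u) * v := by
          rw [hvw, hvz, hvA, hvπ'u]
      _ = (w - z - ζ' * (π + π') - π' * u) * v := by noncomm_ring
  have e1 : A - π * u = w + z - (ζ * π + ζ' * π') := by
    rw [hA, hu]
    calc w + z - ζ' * (π + π') - π * (ζ - ζ')
        = w + z - (π * ζ + ζ' * π') + (π * ζ' - ζ' * π) := by noncomm_ring
      _ = w + z - (ζ * π + ζ' * π') := by rw [← hζπ, ← hζ'π]; noncomm_ring
  have e2 : w - z - ζ' * (π + π') - π' * u = w - z - (ζ' * π + ζ * π') := by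
    rw [hu]
    calc w - z - ζ' * (π + π') - π' * (ζ - ζ')
        = w - z - (ζ' * π + π' * ζ) + (π' * ζ' - ζ' * π') := by noncomm_ring
      _ = w - z - (ζ' * π + ζ * π') := by rw [← hζπ', ← hζ'π']; noncomm_ring
  have hϖz : (ζ * π + ζ' * π') * z = z * (ζ' * π + ζ * π') := by
    calc (ζ * π + ζ' * π') * z = ζ * (π * z) + ζ' * (π' * z) := by noncomm_ring
      _ = (ζ * z) * π + (ζ' * z) * π' := by rw [hπz, hπ'z]; noncomm_ring
      _ = z * (ζ' * π + ζ * π') := by rw [hζz, hζ'z]; noncomm_ring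
  have key : (w + z - (ζ * π + ζ' * π')) * (w - z - (ζ' * π + ζ * π')) =
      (w - (ζ * π + ζ' * π')) * (w - (ζ' * π + ζ * π')) - z ^ 2 := by
    have h1 : z * (w - (ζ' * π + ζ * π')) = (w - (ζ * π + ζ' * π')) * z := by
      rw [mul_sub, sub_mul, ← hwz, ← hϖz]
    calc (w + z - (ζ * π + ζ' * π')) * (w - z - (ζ' * π + ζ * π'))
        = (w - (ζ * π + ζ' * π')) * (w - (ζ' * π + ζ * π'))
            + (z * (w - (ζ' * π + ζ * π')) - (w - (ζ * π + ζ' * π')) * z)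
            - z ^ 2 := by noncomm_ring
      _ = _ := by rw [h1]; abel
  calc (A * v - π) * (A * v - π')
      = (A - π * u) * (v * (A - π' * u)) * v := by
        rw [step1, step1']; noncomm_ring
    _ = (w + z - (ζ * π + ζ' * π')) * ((w - z - (ζ' * π + ζ * π')) * v) * v := by
        rw [step2, ← e1, e2]
    _ = ((w - (ζ * π + ζ' * π')) * (w - (ζ' * π + ζ * π')) - z ^ 2) * v ^ 2 := by
        rw [← mul_assoc, key]; noncomm_ring
end

section
/- Let D be a (not necessarily commutative) ring and let ζ, ζ', π, π', w, z ∈ D be elements such that ζ, ζ', π, π' commute pairwise and each of them commutes with w; wz = zw; ζz = zζ' and ζ'z = zζ; πz = zπ and π'z = zπ'; and u := ζ − ζ' is invertible in D. Set ϖ₃ := ζπ + ζ'π', ϖ₃' := ζ'π + ζπ', and x := (w + z − ζ'·(π + π'))·u⁻¹. If moreover (w − ϖ₃)(w − ϖ₃') = z², then x² − (π + π')·x + π·π' = 0; that is, x satisfies the same monic quadratic relation as π and π'. -/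
/-- well-definedness of `β₂` in Proposition 2.4 of the paper.
With the same commutation hypotheses as in Lemma 2.3, if moreover
`(w - ϖ₃)(w - ϖ₃') = z²`, then `x := (w + z - ζ'(π + π'))·u⁻¹` satisfies the monic
quadratic relation `x² - (π + π')·x + π·π' = 0` of `π` and `π'`. -/
theorem stmt_2 {D : Type*} [Ring D]
    (ζ ζ' π π' w z v : D)
    (hζζ' : ζ * ζ' = ζ' * ζ)
    (hζπ : ζ * π = π * ζ) (hζπ' : ζ * π' = π' * ζ)
    (hζ'π : ζ' * π = π * ζ') (hζ'π' : ζ' * π' = π' * ζ')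
    (hππ' : π * π' = π' * π)
    (hwζ : w * ζ = ζ * w) (hwζ' : w * ζ' = ζ' * w)
    (hwπ : w * π = π * w) (hwπ' : w * π' = π' * w)
    (hwz : w * z = z * w)
    (hζz : ζ * z = z * ζ') (hζ'z : ζ' * z = z * ζ)
    (hπz : π * z = z * π) (hπ'z : π' * z = z * π')
    (hv : (ζ - ζ') * v = 1) (hv' : v * (ζ - ζ') = 1)
    (hrel : (w - (ζ * π + ζ' * π')) * (w - (ζ' * π + ζ * π')) = z ^ 2) :
    ((w + z - ζ' * (π + π')) * v) ^ 2
        - (π + π') * ((w + z - ζ' * (π + π')) * v) + π * π' = 0 := by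
  -- helper: right-assoc swap lemmas
  have swap3 : ∀ a b c d : D, a * b = c * d → ∀ t : D, a * (b * t) = c * (d * t) :=
    fun a b c d h t => by rw [← mul_assoc, h, mul_assoc]
  -- commutation of v with elements commuting with ζ - ζ'
  have key : ∀ t : D, (ζ - ζ') * t = t * (ζ - ζ') → v * t = t * v := by
    intro t ht
    calc v * t = v * t * ((ζ - ζ') * v) := by rw [hv, mul_one]
      _ = v * (t * (ζ - ζ')) * v := by noncomm_ring
      _ = v * ((ζ - ζ') * t) * v := by rw [ht]
      _ = (v * (ζ - ζ')) * (t * v) := by noncomm_ring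
      _ = t * v := by rw [hv', one_mul]
  have hvw : v * w = w * v := key w (by rw [sub_mul, mul_sub, hwζ, hwζ'])
  have hvζ' : v * ζ' = ζ' * v := key ζ' (by rw [sub_mul, mul_sub, hζζ'])
  have hvπ : v * π = π * v := key π (by rw [sub_mul, mul_sub, ← hζπ, ← hζ'π])
  have hvπ' : v * π' = π' * v := key π' (by rw [sub_mul, mul_sub, ← hζπ', ← hζ'π'])
  have huz' : z * (ζ - ζ') = -((ζ - ζ') * z) := by
    rw [sub_mul, hζz, hζ'z, mul_sub, neg_sub]
  have hvz : v * z = -(z * v) := by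
    calc v * z = v * z * ((ζ - ζ') * v) := by rw [hv, mul_one]
      _ = v * (z * (ζ - ζ')) * v := by noncomm_ring
      _ = v * (-((ζ - ζ') * z)) * v := by rw [huz']
      _ = -((v * (ζ - ζ')) * (z * v)) := by noncomm_ring
      _ = -(z * v) := by rw [hv', one_mul]
  have hva : v * (w + z - ζ' * (π + π')) = (w - z - ζ' * (π + π')) * v := by
    have e1 : v * (w + z - ζ' * (π + π'))
        = v * w + v * z - (v * ζ') * π - (v * ζ') * π' := by noncomm_ring
    rw [e1, hvz, hvζ', hvw, mul_assoc ζ' v π, mul_assoc ζ' v π', hvπ, hvπ']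
    noncomm_ring
  -- the z² substitution
  have hz2 : z * z = (w - (ζ * π + ζ' * π')) * (w - (ζ' * π + ζ * π')) := by
    rw [← pow_two]; exact hrel.symm
  have hz2' : ∀ t : D, z * (z * t)
      = (w - (ζ * π + ζ' * π')) * ((w - (ζ' * π + ζ * π')) * t) :=
    fun t => by rw [← mul_assoc, hz2, mul_assoc]
  -- the core polynomial identity
  have hP : (w + z - ζ' * (π + π')) * (w - z - ζ' * (π + π'))
      - (π + π') * (w + z - ζ' * (π + π')) * (ζ - ζ')
      + π * π' * ((ζ - ζ') * (ζ - ζ')) = 0 := by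
    simp only [mul_add, add_mul, mul_sub, sub_mul, mul_assoc, mul_neg, neg_mul, neg_neg,
      hz2, hz2',
      hζζ'.symm, swap3 ζ' ζ ζ ζ' hζζ'.symm,
      hζπ.symm, swap3 π ζ ζ π hζπ.symm,
      hζ'π.symm, swap3 π ζ' ζ' π hζ'π.symm,
      hζπ'.symm, swap3 π' ζ ζ π' hζπ'.symm,
      hζ'π'.symm, swap3 π' ζ' ζ' π' hζ'π'.symm,
      hππ'.symm, swap3 π' π π π' hππ'.symm,
      hwζ, swap3 w ζ ζ w hwζ,
      hwζ', swap3 w ζ' ζ' w hwζ',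
      hwπ, swap3 w π π w hwπ,
      hwπ', swap3 w π' π' w hwπ',
      hζ'z.symm, swap3 z ζ ζ' z hζ'z.symm,
      hζz.symm, swap3 z ζ' ζ z hζz.symm,
      hπz.symm, swap3 z π π z hπz.symm,
      hπ'z.symm, swap3 z π' π' z hπ'z.symm,
      hwz.symm, swap3 z w w z hwz.symm]
    abel
  have hab : (w + z - ζ' * (π + π')) * (w - z - ζ' * (π + π'))
      = (π + π') * (w + z - ζ' * (π + π')) * (ζ - ζ')
        - π * π' * ((ζ - ζ') * (ζ - ζ')) := by
    rw [eq_sub_iff_add_eq, ← sub_eq_zero, ← sub_add_eq_add_sub]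
    exact hP
  calc ((w + z - ζ' * (π + π')) * v) ^ 2
        - (π + π') * ((w + z - ζ' * (π + π')) * v) + π * π'
      = (w + z - ζ' * (π + π')) * (v * (w + z - ζ' * (π + π'))) * v
        - (π + π') * ((w + z - ζ' * (π + π')) * v) + π * π' := by rw [sq]; noncomm_ring
    _ = ((w + z - ζ' * (π + π')) * (w - z - ζ' * (π + π'))) * (v * v)
        - (π + π') * ((w + z - ζ' * (π + π')) * v) + π * π' := by rw [hva]; noncomm_ring
    _ = ((π + π') * ((w + z - ζ' * (π + π')) * (((ζ - ζ') * v) * v))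
          - π * π' * ((ζ - ζ') * (((ζ - ζ') * v) * v)))
        - (π + π') * ((w + z - ζ' * (π + π')) * v) + π * π' := by rw [hab]; noncomm_ring
    _ = 0 := by rw [hv, one_mul, hv, mul_one]; noncomm_ring
end

section
/- Let D be a (not necessarily commutative) ring and let ζ, ζ', π, π', w, z ∈ D be elements such that ζ, ζ', π, π' commute pairwise and each of them commutes with w; wz = zw; ζz = zζ' and ζ'z = zζ; πz = zπ and π'z = zπ'; and u := ζ − ζ' is invertible in D. Set x := (w + z − ζ'·(π + π'))·u⁻¹ and x' := (π + π') − x. Then x·ζ − ζ·x = z and ζ·x + x'·ζ' = w. -/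
/-- recovery of the canonical elements, Proposition 2.4 of the
paper. With the commutation hypotheses of Lemma 2.3, setting
`x := (w + z - ζ'(π + π'))·u⁻¹` and `x' := (π + π') - x`, one has
`x·ζ - ζ·x = z` and `ζ·x + x'·ζ' = w`. -/
theorem stmt_3 {D : Type*} [Ring D]
    (ζ ζ' π π' w z v : D)
    (hζζ' : ζ * ζ' = ζ' * ζ)
    (hζπ : ζ * π = π * ζ) (hζπ' : ζ * π' = π' * ζ)
    (hζ'π : ζ' * π = π * ζ') (hζ'π' : ζ' * π' = π' * ζ')
    (hππ' : π * π' = π' * π)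
    (hwζ : w * ζ = ζ * w) (hwζ' : w * ζ' = ζ' * w)
    (hwπ : w * π = π * w) (hwπ' : w * π' = π' * w)
    (hwz : w * z = z * w)
    (hζz : ζ * z = z * ζ') (hζ'z : ζ' * z = z * ζ)
    (hπz : π * z = z * π) (hπ'z : π' * z = z * π')
    (hv : (ζ - ζ') * v = 1) (hv' : v * (ζ - ζ') = 1) :
    ((w + z - ζ' * (π + π')) * v) * ζ - ζ * ((w + z - ζ' * (π + π')) * v) = z ∧
    ζ * ((w + z - ζ' * (π + π')) * v)
      + ((π + π') - (w + z - ζ' * (π + π')) * v) * ζ' = w := by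

  have hcomm : ∀ a : D, a * (ζ - ζ') = (ζ - ζ') * a → v * a = a * v := by
    intro a ha
    have step1 : v * (a * (ζ - ζ')) * v = v * a := by
      rw [mul_assoc v, mul_assoc a, hv, mul_one]
    have step2 : v * ((ζ - ζ') * a) * v = a * v := by
      rw [← mul_assoc v (ζ - ζ') a, hv', one_mul]
    rw [← step1, ha, step2]
  have hvζ : v * ζ = ζ * v := hcomm ζ (by rw [mul_sub, sub_mul, hζζ'])
  have hvζ' : v * ζ' = ζ' * v := hcomm ζ' (by rw [mul_sub, sub_mul, hζζ'])
  set A := w + z - ζ' * (π + π') with hA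
  have key1 : ζ * (ζ' * (π + π')) = ζ' * (π + π') * ζ := by
    calc ζ * (ζ' * (π + π')) = (ζ * ζ') * π + (ζ * ζ') * π' := by noncomm_ring
    _ = (ζ' * ζ) * π + (ζ' * ζ) * π' := by rw [hζζ']
    _ = ζ' * (ζ * π) + ζ' * (ζ * π') := by noncomm_ring
    _ = ζ' * (π * ζ) + ζ' * (π' * ζ) := by rw [hζπ, hζπ']
    _ = ζ' * (π + π') * ζ := by noncomm_ring
  have h1 : A * ζ - ζ * A = z * (ζ - ζ') := by
    have e1 : A * ζ - ζ * A
        = (w * ζ - ζ * w) + (z * ζ - ζ * z)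
          + (ζ * (ζ' * (π + π')) - ζ' * (π + π') * ζ) := by
      rw [hA]; noncomm_ring
    rw [e1, hwζ, hζz, key1]; noncomm_ring
  have h2 : ζ * A - A * ζ' = (w - ζ' * (π + π')) * (ζ - ζ') := by
    have e2 : ζ * A - A * ζ'
        = (ζ * w - w * ζ') + (ζ * z - z * ζ')
          + (ζ' * (π + π') * ζ' - ζ * (ζ' * (π + π'))) := by
      rw [hA]; noncomm_ring
    rw [e2, ← hwζ, hζz, key1]; noncomm_ring
  constructor
  · have e3 : A * v * ζ - ζ * (A * v) = (A * ζ - ζ * A) * v := by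
      rw [mul_assoc A v ζ, hvζ, ← mul_assoc A ζ v, sub_mul (A * ζ) (ζ * A) v,
        ← mul_assoc ζ A v]
    rw [e3, h1, mul_assoc, hv, mul_one]
  · have key : ζ * (A * v) - A * v * ζ' = w - ζ' * (π + π') := by
      have e4 : ζ * (A * v) - A * v * ζ' = (ζ * A - A * ζ') * v := by
        rw [mul_assoc A v ζ', hvζ', ← mul_assoc A ζ' v, sub_mul (ζ * A) (A * ζ') v,
          ← mul_assoc ζ A v]
      rw [e4, h2, mul_assoc, hv, mul_one]
    have hπζ' : (π + π') * ζ' = ζ' * (π + π') := by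
      rw [add_mul, ← hζ'π, ← hζ'π', mul_add]
    have e5 : ζ * (A * v) + ((π + π') - A * v) * ζ'
        = (ζ * (A * v) - A * v * ζ') + (π + π') * ζ' := by noncomm_ring
    rw [e5, key, hπζ']; noncomm_ring
end

section
/- Let D be a (not necessarily commutative) ring, let a, b ∈ D, and let s, n, t, m be central elements of D such that a² = s·a − n and b² = t·b − m. Set a' := s − a, b' := t − b, w := a·b + b'·a', and z := b·a − a·b. Then: (i) w·a = a·w; (ii) z·a = a'·z; (iii) w·z = z·w; and (iv) w² − s·t·w + ((s² − 2n)·m + (t² − 2m)·n) = z². -/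
/-- universal-property computation in Proposition 2.4 of the
paper. In a ring `D`, for `a, b ∈ D` satisfying monic quadratic relations
`a² = s·a - n`, `b² = t·b - m` with `s, n, t, m` central, the elements
`w := a·b + b'·a'` and `z := b·a - a·b` (where `a' := s - a`, `b' := t - b`)
satisfy `wa = aw`, `za = a'z`, `wz = zw`, and
`w² - st·w + ((s² - 2n)m + (t² - 2m)n) = z²`. -/
theorem stmt_4 {D : Type*} [Ring D]
    (a b s n t m : D)
    (hs : ∀ d : D, s * d = d * s) (hn : ∀ d : D, n * d = d * n)
    (ht : ∀ d : D, t * d = d * t) (hm : ∀ d : D, m * d = d * m)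
    (ha : a ^ 2 = s * a - n) (hb : b ^ 2 = t * b - m) :
    ((a * b + (t - b) * (s - a)) * a = a * (a * b + (t - b) * (s - a))) ∧
    ((b * a - a * b) * a = (s - a) * (b * a - a * b)) ∧
    ((a * b + (t - b) * (s - a)) * (b * a - a * b)
        = (b * a - a * b) * (a * b + (t - b) * (s - a))) ∧
    ((a * b + (t - b) * (s - a)) ^ 2 - s * t * (a * b + (t - b) * (s - a))
        + ((s ^ 2 - 2 * n) * m + (t ^ 2 - 2 * m) * n)
      = (b * a - a * b) ^ 2) := by

  have haa : a * a = s * a - n := by rw [← pow_two]; exact ha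
  have hbb : b * b = t * b - m := by rw [← pow_two]; exact hb
  have haa' : ∀ x : D, a * (a * x) = s * (a * x) - n * x := by
    intro x; rw [← mul_assoc, haa, sub_mul, mul_assoc]
  have hbb' : ∀ x : D, b * (b * x) = t * (b * x) - m * x := by
    intro x; rw [← mul_assoc, hbb, sub_mul, mul_assoc]
  have pas : a * s = s * a := (hs a).symm
  have pan : a * n = n * a := (hn a).symm
  have pat : a * t = t * a := (ht a).symm
  have pam : a * m = m * a := (hm a).symm
  have pbs : b * s = s * b := (hs b).symm
  have pbn : b * n = n * b := (hn b).symm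
  have pbt : b * t = t * b := (ht b).symm
  have pbm : b * m = m * b := (hm b).symm
  have pas' : ∀ x : D, a * (s * x) = s * (a * x) := by
    intro x; rw [← mul_assoc, pas, mul_assoc]
  have pan' : ∀ x : D, a * (n * x) = n * (a * x) := by
    intro x; rw [← mul_assoc, pan, mul_assoc]
  have pat' : ∀ x : D, a * (t * x) = t * (a * x) := by
    intro x; rw [← mul_assoc, pat, mul_assoc]
  have pam' : ∀ x : D, a * (m * x) = m * (a * x) := by
    intro x; rw [← mul_assoc, pam, mul_assoc]
  have pbs' : ∀ x : D, b * (s * x) = s * (b * x) := by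
    intro x; rw [← mul_assoc, pbs, mul_assoc]
  have pbn' : ∀ x : D, b * (n * x) = n * (b * x) := by
    intro x; rw [← mul_assoc, pbn, mul_assoc]
  have pbt' : ∀ x : D, b * (t * x) = t * (b * x) := by
    intro x; rw [← mul_assoc, pbt, mul_assoc]
  have pbm' : ∀ x : D, b * (m * x) = m * (b * x) := by
    intro x; rw [← mul_assoc, pbm, mul_assoc]
  have cns : n * s = s * n := hn s
  have cts : t * s = s * t := ht s
  have cms : m * s = s * m := hm s
  have ctn : t * n = n * t := (hn t).symm
  have cmn : m * n = n * m := (hn m).symm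
  have cmt : m * t = t * m := hm t
  have cns' : ∀ x : D, n * (s * x) = s * (n * x) := by
    intro x; rw [← mul_assoc, cns, mul_assoc]
  have cts' : ∀ x : D, t * (s * x) = s * (t * x) := by
    intro x; rw [← mul_assoc, cts, mul_assoc]
  have cms' : ∀ x : D, m * (s * x) = s * (m * x) := by
    intro x; rw [← mul_assoc, cms, mul_assoc]
  have ctn' : ∀ x : D, t * (n * x) = n * (t * x) := by
    intro x; rw [← mul_assoc, ctn, mul_assoc]
  have cmn' : ∀ x : D, m * (n * x) = n * (m * x) := by
    intro x; rw [← mul_assoc, cmn, mul_assoc]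
  have cmt' : ∀ x : D, m * (t * x) = t * (m * x) := by
    intro x; rw [← mul_assoc, cmt, mul_assoc]
  refine ⟨?_, ?_, ?_, ?_⟩ <;>
  · simp only [pow_two, two_mul, mul_sub, sub_mul, mul_add, add_mul, mul_assoc,
      haa, hbb, haa', hbb',
      pas, pan, pat, pam, pbs, pbn, pbt, pbm,
      pas', pan', pat', pam', pbs', pbn', pbt', pbm',
      cns, cts, cms, ctn, cmn, cmt,
      cns', cts', cms', ctn', cmn', cmt']
    abel
end

section
/- Let A be a (not necessarily commutative) ring and let ζ, ζ', z ∈ A satisfy ζζ' = ζ'ζ, ζz = zζ', ζ'z = zζ, with 1 + z invertible in A. Set η := (1 + z)⁻¹·(ζ − ζ') + ζ' and η' := (1 + z)⁻¹·(ζ' − ζ) + ζ. Then η + η' = ζ + ζ' and η·η' = ζ·ζ'. In particular, if ζ + ζ' and ζ·ζ' are central in A, then η satisfies the same monic quadratic polynomial X² − (ζ+ζ')X + ζζ' as ζ and ζ'. -/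
/-- Lemma 4.16, `shiftpair`, of the paper. In a ring `A`, let
`ζ, ζ', z` satisfy `ζζ' = ζ'ζ`, `ζz = zζ'`, `ζ'z = zζ`, and let `v` be a two-sided
inverse of `1 + z`. Put `η := (1 + z)⁻¹(ζ - ζ') + ζ'` and `η' := (1 + z)⁻¹(ζ' - ζ) + ζ`.
Then `η + η' = ζ + ζ'` and `η·η' = ζ·ζ'`; in particular, if `ζ + ζ'` and `ζ·ζ'` are
central, then `η² - (ζ + ζ')·η + ζ·ζ' = 0`. -/
theorem stmt_16 {A : Type*} [Ring A]
    (ζ ζ' z v : A)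
    (hζζ' : ζ * ζ' = ζ' * ζ)
    (hζz : ζ * z = z * ζ') (hζ'z : ζ' * z = z * ζ)
    (hv : (1 + z) * v = 1) (hv' : v * (1 + z) = 1) :
    (v * (ζ - ζ') + ζ') + (v * (ζ' - ζ) + ζ) = ζ + ζ' ∧
    (v * (ζ - ζ') + ζ') * (v * (ζ' - ζ) + ζ) = ζ * ζ' ∧
    ((∀ d : A, (ζ + ζ') * d = d * (ζ + ζ')) → (∀ d : A, (ζ * ζ') * d = d * (ζ * ζ')) →
      (v * (ζ - ζ') + ζ') ^ 2 - (ζ + ζ') * (v * (ζ - ζ') + ζ') + ζ * ζ' = 0) := by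
  have h1u : (1 + z) * (v * (ζ - ζ')) = ζ - ζ' := by
    calc (1 + z) * (v * (ζ - ζ')) = ((1 + z) * v) * (ζ - ζ') := by noncomm_ring
    _ = ζ - ζ' := by rw [hv, one_mul]
  have hzu : z * (v * (ζ - ζ')) = (ζ - ζ') - v * (ζ - ζ') := by
    have : z * (v * (ζ - ζ')) = (1 + z) * (v * (ζ - ζ')) - v * (ζ - ζ') := by noncomm_ring
    rw [this, h1u]
  have key : (v * (ζ - ζ')) * ζ - ζ' * (v * (ζ - ζ'))
      - (v * (ζ - ζ')) * (v * (ζ - ζ')) = 0 := by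
    have hz0 : (1 + z) * ((v * (ζ - ζ')) * ζ - ζ' * (v * (ζ - ζ'))
        - (v * (ζ - ζ')) * (v * (ζ - ζ'))) = 0 := by
      have e1 : (1 + z) * ((v * (ζ - ζ')) * ζ) = (ζ - ζ') * ζ := by
        calc (1 + z) * ((v * (ζ - ζ')) * ζ) = ((1 + z) * (v * (ζ - ζ'))) * ζ := by
              noncomm_ring
        _ = (ζ - ζ') * ζ := by rw [h1u]
      have e2 : (1 + z) * ((v * (ζ - ζ')) * (v * (ζ - ζ'))) = (ζ - ζ') * (v * (ζ - ζ')) := by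
        calc (1 + z) * ((v * (ζ - ζ')) * (v * (ζ - ζ')))
            = ((1 + z) * (v * (ζ - ζ'))) * (v * (ζ - ζ')) := by noncomm_ring
        _ = (ζ - ζ') * (v * (ζ - ζ')) := by rw [h1u]
      have e3 : (1 + z) * (ζ' * (v * (ζ - ζ')))
          = ζ' * (v * (ζ - ζ')) + ζ * ((ζ - ζ') - v * (ζ - ζ')) := by
        calc (1 + z) * (ζ' * (v * (ζ - ζ')))
            = ζ' * (v * (ζ - ζ')) + (z * ζ') * (v * (ζ - ζ')) := by noncomm_ring
        _ = ζ' * (v * (ζ - ζ')) + (ζ * z) * (v * (ζ - ζ')) := by rw [← hζz]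
        _ = ζ' * (v * (ζ - ζ')) + ζ * (z * (v * (ζ - ζ'))) := by noncomm_ring
        _ = ζ' * (v * (ζ - ζ')) + ζ * ((ζ - ζ') - v * (ζ - ζ')) := by rw [hzu]
      calc (1 + z) * ((v * (ζ - ζ')) * ζ - ζ' * (v * (ζ - ζ'))
            - (v * (ζ - ζ')) * (v * (ζ - ζ')))
          = (1 + z) * ((v * (ζ - ζ')) * ζ) - (1 + z) * (ζ' * (v * (ζ - ζ')))
            - (1 + z) * ((v * (ζ - ζ')) * (v * (ζ - ζ'))) := by noncomm_ring
      _ = (ζ - ζ') * ζ - (ζ' * (v * (ζ - ζ')) + ζ * ((ζ - ζ') - v * (ζ - ζ')))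
            - (ζ - ζ') * (v * (ζ - ζ')) := by rw [e1, e2, e3]
      _ = ζ * ζ' - ζ' * ζ := by noncomm_ring
      _ = 0 := by rw [hζζ', sub_self]
    calc (v * (ζ - ζ')) * ζ - ζ' * (v * (ζ - ζ')) - (v * (ζ - ζ')) * (v * (ζ - ζ'))
        = (v * (1 + z)) * ((v * (ζ - ζ')) * ζ - ζ' * (v * (ζ - ζ'))
            - (v * (ζ - ζ')) * (v * (ζ - ζ'))) := by rw [hv', one_mul]
    _ = v * ((1 + z) * ((v * (ζ - ζ')) * ζ - ζ' * (v * (ζ - ζ'))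
            - (v * (ζ - ζ')) * (v * (ζ - ζ')))) := by noncomm_ring
    _ = 0 := by rw [hz0, mul_zero]
  have hsum : (v * (ζ - ζ') + ζ') + (v * (ζ' - ζ) + ζ) = ζ + ζ' := by noncomm_ring
  have hprod : (v * (ζ - ζ') + ζ') * (v * (ζ' - ζ) + ζ) = ζ * ζ' := by
    calc (v * (ζ - ζ') + ζ') * (v * (ζ' - ζ) + ζ)
        = ((v * (ζ - ζ')) * ζ - ζ' * (v * (ζ - ζ'))
            - (v * (ζ - ζ')) * (v * (ζ - ζ'))) + ζ' * ζ := by noncomm_ring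
    _ = 0 + ζ' * ζ := by rw [key]
    _ = ζ * ζ' := by rw [zero_add, ← hζζ']
  refine ⟨hsum, hprod, fun hs _ => ?_⟩
  have hcomm : (v * (ζ - ζ') + ζ') * (v * (ζ' - ζ) + ζ)
      = (v * (ζ' - ζ) + ζ) * (v * (ζ - ζ') + ζ') := by
    have h0 : (v * (ζ - ζ') + ζ') * (v * (ζ' - ζ) + ζ)
        - (v * (ζ' - ζ) + ζ) * (v * (ζ - ζ') + ζ')
        = (v * (ζ - ζ') + ζ') * (ζ + ζ') - (ζ + ζ') * (v * (ζ - ζ') + ζ') := by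
      rw [← hsum]; noncomm_ring
    have h1 : (ζ + ζ') * (v * (ζ - ζ') + ζ') = (v * (ζ - ζ') + ζ') * (ζ + ζ') :=
      hs _
    rw [h1, sub_self] at h0
    exact sub_eq_zero.mp h0
  calc (v * (ζ - ζ') + ζ') ^ 2 - (ζ + ζ') * (v * (ζ - ζ') + ζ') + ζ * ζ'
      = (v * (ζ - ζ') + ζ') ^ 2
        - ((v * (ζ - ζ') + ζ') + (v * (ζ' - ζ) + ζ)) * (v * (ζ - ζ') + ζ')
        + (v * (ζ' - ζ) + ζ) * (v * (ζ - ζ') + ζ') := by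
        rw [hsum, ← hcomm, hprod]
  _ = 0 := by noncomm_ring
end

section
/- Let A be a (not necessarily commutative) ring and let ζ, ζ', z ∈ A satisfy ζζ' = ζ'ζ, ζz = zζ', ζ'z = zζ, with both 1 + z and 1 − z invertible in A (hence 1 − z² is invertible). Set η := (1 + z)⁻¹·(ζ − ζ') + ζ' and η' := (ζ + ζ') − η. Then: (i) η·ζ + ζ'·η' = (1 − z²)⁻¹·(ζ − ζ')² + 2·ζ·ζ', and (ii) η·ζ − ζ·η = −z·(1 − z²)⁻¹·(ζ − ζ')². -/
/-- Lemma 4.18, `revisedmat2`, of the paper. In a ring `A`, let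
`ζ, ζ', z` satisfy `ζζ' = ζ'ζ`, `ζz = zζ'`, `ζ'z = zζ`, let `vp` be a two-sided
inverse of `1 + z`, `vm` a two-sided inverse of `1 - z`, and `u` a two-sided
inverse of `1 - z²`. Put `η := (1 + z)⁻¹(ζ - ζ') + ζ'` and `η' := (ζ + ζ') - η`.
Then `η·ζ + ζ'·η' = (1 - z²)⁻¹(ζ - ζ')² + 2ζζ'` and
`η·ζ - ζ·η = -z·(1 - z²)⁻¹(ζ - ζ')²`. -/
theorem stmt_17 {A : Type*} [Ring A]
    (ζ ζ' z vp vm u : A)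
    (hζζ' : ζ * ζ' = ζ' * ζ)
    (hζz : ζ * z = z * ζ') (hζ'z : ζ' * z = z * ζ)
    (hvp : (1 + z) * vp = 1) (hvp' : vp * (1 + z) = 1)
    (hvm : (1 - z) * vm = 1) (hvm' : vm * (1 - z) = 1)
    (hu : (1 - z * z) * u = 1) (hu' : u * (1 - z * z) = 1) :
    (vp * (ζ - ζ') + ζ') * ζ + ζ' * ((ζ + ζ') - (vp * (ζ - ζ') + ζ'))
        = u * (ζ - ζ') ^ 2 + 2 * (ζ * ζ') ∧
    (vp * (ζ - ζ') + ζ') * ζ - ζ * (vp * (ζ - ζ') + ζ')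
        = -(z * (u * (ζ - ζ') ^ 2)) := by
  -- `vp = u * (1 - z)`
  have hvp_eq : vp = u * (1 - z) := by
    linear_combination (norm := noncomm_ring) u * (1 - z) * hvp - hu' * vp
  -- elements commuting with `z * z` commute with `u`
  have habu : ∀ a : A, a * (z * z) = (z * z) * a → a * u = u * a := by
    intro a ha
    linear_combination (norm := noncomm_ring) u * a * hu - hu' * (a * u) + u * ha * u
  have hzu : z * u = u * z := habu z (by noncomm_ring)
  have hζu : ζ * u = u * ζ := habu ζ (by
    linear_combination (norm := noncomm_ring) hζz * z + z * hζ'z)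
  have hζ'u : ζ' * u = u * ζ' := habu ζ' (by
    linear_combination (norm := noncomm_ring) hζ'z * z + z * hζz)
  rw [hvp_eq]
  constructor
  · linear_combination (norm := noncomm_ring)
      u * (hζ'z * (ζ - ζ')) + u * hζζ' - u * (z * hζζ')
        - hζ'u * ((1 - z) * (ζ - ζ')) - 2 * hζζ'
  · linear_combination (norm := noncomm_ring)
      - hζu * ((1 - z) * (ζ - ζ')) + u * hζζ' + u * (hζz * (ζ - ζ'))
        - u * (z * hζζ') + hzu * (ζ - ζ') ^ 2 - hζζ'
end

section
/- Let S be a commutative ring with a ring involution σ, let M := {x ∈ S : σ(x) = x} be the fixed subring, and let ζ ∈ S be such that ζ − σ(ζ) is invertible in S and S = M ⊕ ζ·M as additive groups. Let Λ ⊆ S be an additive subgroup satisfying ζ·Λ ⊆ Λ, (ζ − σ(ζ))⁻¹·Λ ⊆ Λ, and σ(Λ) ⊆ Λ. Then Λ = (Λ ∩ M) ⊕ ζ·(Λ ∩ M). -/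
/-- key decomposition in the proof of Theorem 3.6 of the paper.
Let `S` be a commutative ring with ring involution `σ`, with fixed subring
`M = S^{σ = 1}`, and let `ζ ∈ S` be such that `u` is an inverse of `ζ - σ(ζ)` and
`S = M ⊕ ζ·M` as additive groups.  If `Λ ⊆ S` is an additive subgroup with
`ζ·Λ ⊆ Λ`, `(ζ - σ(ζ))⁻¹·Λ ⊆ Λ` and `σ(Λ) ⊆ Λ`, then `Λ = (Λ ∩ M) ⊕ ζ·(Λ ∩ M)`. -/
theorem stmt_18 {S : Type*} [CommRing S]
    (σ : S →+* S) (hσ : ∀ x, σ (σ x) = x)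
    (ζ u : S) (hu : (ζ - σ ζ) * u = 1)
    (hdec : ∀ x : S, ∃ a b : S, σ a = a ∧ σ b = b ∧ x = a + ζ * b)
    (hindep : ∀ a b : S, σ a = a → σ b = b → a + ζ * b = 0 → a = 0 ∧ b = 0)
    (Λ : AddSubgroup S)
    (hζΛ : ∀ x ∈ Λ, ζ * x ∈ Λ)
    (huΛ : ∀ x ∈ Λ, u * x ∈ Λ)
    (hσΛ : ∀ x ∈ Λ, σ x ∈ Λ) :
    (Λ : Set S) = {x | ∃ a b : S, a ∈ Λ ∧ σ a = a ∧ b ∈ Λ ∧ σ b = b ∧ x = a + ζ * b} := by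
  ext x
  constructor
  · intro hx
    obtain ⟨a, b, ha, hb, hab⟩ := hdec x
    have hσx : σ x = a + σ ζ * b := by
      rw [hab, map_add, map_mul, ha, hb]
    have hkey : (ζ - σ ζ) * b = x - σ x := by
      rw [hσx, hab]; ring
    have hbval : b = u * (x - σ x) := by
      calc b = u * ((ζ - σ ζ) * b) := by
              rw [← mul_assoc, mul_comm u, hu, one_mul]
        _ = u * (x - σ x) := by rw [hkey]
    have hbΛ : b ∈ Λ := by
      rw [hbval]; exact huΛ _ (Λ.sub_mem hx (hσΛ _ hx))
    have haΛ : a ∈ Λ := by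
      have : a = x - ζ * b := by rw [hab]; ring
      rw [this]; exact Λ.sub_mem hx (hζΛ _ hbΛ)
    exact ⟨a, b, haΛ, ha, hbΛ, hb, hab⟩
  · rintro ⟨a, b, haΛ, -, hbΛ, -, rfl⟩
    exact Λ.add_mem haΛ (hζΛ _ hbΛ)
end

section
/- Let K be a nonarchimedean local field with ring of integers O, uniformizer π, and normalized valuation v. Let t₁, t₂ ∈ K^× with v(t₁) + v(t₂) = 1, and define the additive map z: K ⊕ K → K ⊕ K by z(a, b) = (t₁·b, t₂·a). Then for (m₁, m₂) ∈ ℤ², the lattice Λ = π^{m₁}O ⊕ π^{m₂}O satisfies z(Λ) ⊆ Λ if and only if −v(t₂) ≤ m₁ − m₂ ≤ v(t₁); consequently, the set of such lattices up to simultaneous scaling by powers of π (i.e., up to (m₁, m₂) ↦ (m₁ + k, m₂ + k) for k ∈ ℤ) has exactly two elements. -/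
/-!
Multiplication by `π ^ e * u` maps `π ^ n O` onto `π ^ (e + n) O`, and `π ^ k O ⊆ π ^ m O` exactly
when `m ≤ k`, because a negative power of an irreducible element never lies in `O`. So `z` preserves
`π ^ m₁ O ⊕ π ^ m₂ O` iff `m₁ ≤ e₁ + m₂` and `m₂ ≤ e₂ + m₁`. The stable lattices up to scaling are
then classified by `m₁ - m₂ ∈ [-e₂, e₁]`, an interval with `e₁ + e₂ + 1 = 2` elements.
-/

section ZPowLattice

variable {A K : Type*} [CommRing A] [Field K] [Algebra A K] [IsFractionRing A K]
  {π : A}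

theorem Irreducible.zpow_mem_range_algebraMap_iff (hπ : Irreducible π) {d : ℤ} :
    (∃ b : A, algebraMap A K π ^ d = algebraMap A K b) ↔ 0 ≤ d := by
  constructor
  · rintro ⟨b, hb⟩
    by_contra! hd
    have hπK : algebraMap A K π ≠ 0 :=
      (map_ne_zero_iff _ (IsFractionRing.injective A K)).mpr hπ.ne_zero
    have hunit : π ^ (-d).toNat * b = 1 := by
      apply IsFractionRing.injective A K
      rw [map_mul, map_one, map_pow, ← hb, ← zpow_natCast, Int.toNat_of_nonneg (by omega),
        ← zpow_add₀ hπK, neg_add_cancel, zpow_zero]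
    exact hπ.not_isUnit ((isUnit_pow_iff (n := (-d).toNat) (by omega)).mp (.of_mul_eq_one _ hunit))
  · intro hd
    exact ⟨π ^ d.toNat, by rw [map_pow, ← zpow_natCast, Int.toNat_of_nonneg hd]⟩

theorem Irreducible.forall_zpow_mul_unit_mul_mem_iff (hπ : Irreducible π) (u : Aˣ) (e m n : ℤ) :
    (∀ x : K, (∃ a : A, x = algebraMap A K π ^ n * algebraMap A K a) →
      ∃ a : A, algebraMap A K π ^ e * algebraMap A K (u : A) * x =
        algebraMap A K π ^ m * algebraMap A K a) ↔ m ≤ e + n := by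
  set πK := algebraMap A K π
  have hπK : πK ≠ 0 := (map_ne_zero_iff _ (IsFractionRing.injective A K)).mpr hπ.ne_zero
  have hsplit : πK ^ e * πK ^ n = πK ^ m * πK ^ (e + n - m) := by
    rw [← zpow_add₀ hπK, ← zpow_add₀ hπK]
    ring_nf
  constructor
  · intro h
    obtain ⟨a, ha⟩ := h (πK ^ n) ⟨1, by rw [map_one, mul_one]⟩
    have huv : algebraMap A K (u : A) * algebraMap A K (↑u⁻¹ : A) = 1 := by
      rw [← map_mul, Units.mul_inv, map_one]
    have hd : πK ^ (e + n - m) = algebraMap A K (a * ↑u⁻¹) := by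
      apply mul_left_cancel₀ (zpow_ne_zero m hπK)
      rw [map_mul]
      linear_combination algebraMap A K (↑u⁻¹ : A) * ha - hsplit - πK ^ e * πK ^ n * huv
    have := (hπ.zpow_mem_range_algebraMap_iff (K := K)).mp ⟨_, hd⟩
    omega
  · rintro h x ⟨a, rfl⟩
    obtain ⟨b, hb⟩ := (hπ.zpow_mem_range_algebraMap_iff (K := K)).mpr (by omega : 0 ≤ e + n - m)
    refine ⟨b * (u * a), ?_⟩
    rw [map_mul, map_mul, ← hb]
    linear_combination algebraMap A K (u : A) * algebraMap A K a * hsplit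

end ZPowLattice

section DiagonalShift

variable (P : ℤ → ℤ → Prop) {a b : ℤ}

def quotDiagonalShiftEquivIcc (hP : ∀ m₁ m₂, P m₁ m₂ ↔ a ≤ m₁ - m₂ ∧ m₁ - m₂ ≤ b) :
    Quot (fun p p' : {m : ℤ × ℤ // P m.1 m.2} =>
      ∃ k : ℤ, (p' : ℤ × ℤ) = (p.1.1 + k, p.1.2 + k)) ≃ Set.Icc a b where
  toFun := Quot.lift (fun p => ⟨p.1.1 - p.1.2, (hP _ _).mp p.2⟩) <| by
    rintro p p' ⟨k, hk⟩
    exact Subtype.ext (by simp only [hk]; ring)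
  invFun d := Quot.mk _ ⟨(d, 0), (hP _ _).mpr (by rw [sub_zero]; exact d.2)⟩
  left_inv := Quot.ind fun p => Quot.sound ⟨p.1.2, by ext <;> simp⟩
  right_inv d := by simp

theorem card_quot_diagonalShift_of_iff_sub_mem_Icc
    (hP : ∀ m₁ m₂, P m₁ m₂ ↔ a ≤ m₁ - m₂ ∧ m₁ - m₂ ≤ b) :
    Nat.card (Quot (fun p p' : {m : ℤ × ℤ // P m.1 m.2} =>
      ∃ k : ℤ, (p' : ℤ × ℤ) = (p.1.1 + k, p.1.2 + k))) = (b + 1 - a).toNat := by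
  rw [Nat.card_congr (quotDiagonalShiftEquivIcc P hP), ← Finset.coe_Icc, Nat.card_coe_set_eq,
    Set.ncard_coe_finset, Int.card_Icc]

end DiagonalShift

theorem stmt_19_general
    (A : Type*) [CommRing A]
    (K : Type*) [Field K] [Algebra A K] [IsFractionRing A K]
    (π : A) (hπ : Irreducible π)
    (e₁ e₂ : ℤ) (he : e₁ + e₂ = 1) (u₁ u₂ : Aˣ) :
    let πK : K := algebraMap A K π
    let t₁ : K := πK ^ e₁ * algebraMap A K (u₁ : A)
    let t₂ : K := πK ^ e₂ * algebraMap A K (u₂ : A)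
    let mem : ℤ → K → Prop := fun m x => ∃ a : A, x = πK ^ m * algebraMap A K a
    let stable : ℤ → ℤ → Prop := fun m₁ m₂ =>
      (∀ b : K, mem m₂ b → mem m₁ (t₁ * b)) ∧
      (∀ a : K, mem m₁ a → mem m₂ (t₂ * a))
    (∀ m₁ m₂ : ℤ, stable m₁ m₂ ↔ (-e₂ ≤ m₁ - m₂ ∧ m₁ - m₂ ≤ e₁)) ∧
    Nat.card (Quot (fun p p' : {m : ℤ × ℤ // stable m.1 m.2} =>
      ∃ k : ℤ, (p' : ℤ × ℤ) = (p.1.1 + k, p.1.2 + k))) = 2 := by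
  intro πK t₁ t₂ mem stable
  have hstable (m₁ m₂ : ℤ) : stable m₁ m₂ ↔ (-e₂ ≤ m₁ - m₂ ∧ m₁ - m₂ ≤ e₁) :=
    (and_congr (hπ.forall_zpow_mul_unit_mul_mem_iff u₁ e₁ m₁ m₂)
      (hπ.forall_zpow_mul_unit_mul_mem_iff u₂ e₂ m₂ m₁)).trans (by omega)
  refine ⟨hstable, ?_⟩
  rw [card_quot_diagonalShift_of_iff_sub_mem_Icc stable hstable]
  omega

/-- lattice count in the split/unramified case of Theorem 4.14
of the paper. Let `K` be a nonarchimedean local field with ring of integers `O`,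
uniformizer `π` and normalized valuation `v`.  Let `t₁, t₂ ∈ K^×` with
`v(t₁) + v(t₂) = 1` (encoded as `tᵢ = π^{eᵢ}·uᵢ` with `uᵢ ∈ O^×` and
`e₁ + e₂ = 1`), and define `z : K ⊕ K → K ⊕ K` by `z(a, b) = (t₁·b, t₂·a)`.
Then the lattice `Λ = π^{m₁}O ⊕ π^{m₂}O` satisfies `z(Λ) ⊆ Λ` if and only if
`-v(t₂) ≤ m₁ - m₂ ≤ v(t₁)`, and the set of such lattices up to simultaneous
scaling by powers of `π` has exactly two elements. -/
theorem stmt_19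
    (A : Type*) [CommRing A] [IsDomain A] [IsDiscreteValuationRing A]
    [IsAdicComplete (IsLocalRing.maximalIdeal A) A]
    [Finite (IsLocalRing.ResidueField A)]
    (K : Type*) [Field K] [Algebra A K] [IsFractionRing A K]
    (π : A) (hπ : Irreducible π)
    (e₁ e₂ : ℤ) (he : e₁ + e₂ = 1) (u₁ u₂ : Aˣ) :
    let πK : K := algebraMap A K π
    let t₁ : K := πK ^ e₁ * algebraMap A K (u₁ : A)
    let t₂ : K := πK ^ e₂ * algebraMap A K (u₂ : A)
    let mem : ℤ → K → Prop := fun m x => ∃ a : A, x = πK ^ m * algebraMap A K a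
    let stable : ℤ → ℤ → Prop := fun m₁ m₂ =>
      (∀ b : K, mem m₂ b → mem m₁ (t₁ * b)) ∧
      (∀ a : K, mem m₁ a → mem m₂ (t₂ * a))
    (∀ m₁ m₂ : ℤ, stable m₁ m₂ ↔ (-e₂ ≤ m₁ - m₂ ∧ m₁ - m₂ ≤ e₁)) ∧
    Nat.card (Quot (fun p p' : {m : ℤ × ℤ // stable m.1 m.2} =>
      ∃ k : ℤ, (p' : ℤ × ℤ) = (p.1.1 + k, p.1.2 + k))) = 2 :=
  stmt_19_general A K π hπ e₁ e₂ he u₁ u₂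
end
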